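/- arXiv:2305.10620 — 2 statements merged into one kernel-verified Lean document; each statement's English description precedes it below -/
import Mathlib

section
/- With the definitions and assumptions in the context, suppose ε ≥ (1/2)·T_s·l_φ·l_s and h : ℝ^n → ℝ satisfies h(x) < h̄_*(x) for all x ∈ ℝ^n. Then {x ∈ ℝ^n : h(x) ≥ ε} ⊆ underbar-S_* ⊆ S_*, where underbar-S_* = {x ∈ ℝ^n : h̄_*(x) ≥ (1/2)·T_s·l_φ·l_s}. In particular, the set Γ on which the optimization-based control is active is contained in S_*. -/
open Set

/-!
Every `τ ∈ [0, T]` lies within `T_s / 2` of a sample time `i T_s`, and `τ ↦ h_s (φ(x, τ))` is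
`l_s l_φ`-Lipschitz on `[0, T]`; so a margin of `T_s l_φ l_s / 2` at the sample times keeps
`h_s (φ(x, τ))` nonnegative between them.
-/

lemma exists_nat_le_abs_sub_mul_le_half {Ts τ : ℝ} {N : ℕ} (hTs : 0 < Ts)
    (hτ : τ ∈ Icc 0 (N * Ts)) : ∃ i ≤ N, |τ - i * Ts| ≤ Ts / 2 := by
  set r := τ / Ts
  have hr0 : 0 ≤ r := div_nonneg hτ.1 hTs.le
  have hrN : r ≤ N := (div_le_iff₀ hTs).2 hτ.2
  set i := ⌊r + 1 / 2⌋₊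
  have hi_le : (i : ℝ) ≤ r + 1 / 2 := Nat.floor_le (by positivity)
  have hi_gt : r + 1 / 2 < i + 1 := Nat.lt_floor_add_one _
  refine ⟨i, ?_, ?_⟩
  · have : (i : ℝ) < N + 1 := by linarith
    exact Nat.lt_succ_iff.mp (by exact_mod_cast this)
  · have hτr : τ = r * Ts := (div_mul_cancel₀ τ hTs.ne').symm
    have hri : |r - i| ≤ 1 / 2 := abs_le.2 ⟨by linarith, by linarith⟩
    calc |τ - i * Ts| = |r - i| * Ts := by rw [hτr, ← sub_mul, abs_mul, abs_of_pos hTs]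
      _ ≤ 1 / 2 * Ts := by gcongr
      _ = Ts / 2 := by ring

lemma nonneg_of_le_at_samples {g : ℝ → ℝ} {L Ts τ : ℝ} {N : ℕ} (hL : 0 ≤ L) (hTs : 0 < Ts)
    (hg : ∀ a ∈ Icc 0 (N * Ts), ∀ b ∈ Icc 0 (N * Ts), |g a - g b| ≤ L * |a - b|)
    (hsample : ∀ i ≤ N, L * Ts / 2 ≤ g (i * Ts)) (hτ : τ ∈ Icc 0 (N * Ts)) : 0 ≤ g τ := by
  obtain ⟨i, hiN, hτi⟩ := exists_nat_le_abs_sub_mul_le_half hTs hτ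
  have hi : (i : ℝ) * Ts ∈ Icc 0 (N * Ts) :=
    ⟨by positivity, by gcongr⟩
  have hgap : g (i * Ts) - g τ ≤ L * Ts / 2 :=
    calc g (i * Ts) - g τ ≤ |g τ - g (i * Ts)| := by rw [abs_sub_comm]; exact le_abs_self _
      _ ≤ L * |τ - i * Ts| := hg τ hτ _ hi
      _ ≤ L * (Ts / 2) := by gcongr
      _ = L * Ts / 2 := by ring
  linarith [hsample i hiN]

theorem h_superlevel_subset_ubarSstar_subset_Sstar_general
    (n : ℕ)
    (φ : EuclideanSpace ℝ (Fin n) → ℝ → EuclideanSpace ℝ (Fin n))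
    (hs hb : EuclideanSpace ℝ (Fin n) → ℝ)
    (Sstar : Set (EuclideanSpace ℝ (Fin n)))
    (T : ℝ) (hT : 0 < T)
    (hSstar : Sstar = {x | 0 ≤ hb (φ x T) ∧ ∀ τ ∈ Icc (0:ℝ) T, 0 ≤ hs (φ x τ)})
    (N : ℕ) (hN : 0 < N) (Ts : ℝ) (hTs : Ts = T / N)
    (hbarStar : EuclideanSpace ℝ (Fin n) → ℝ)
    (hhbarStar : ∀ x, hbarStar x =
      min (hb (φ x ((N : ℝ) * Ts)))
        ((Finset.range (N + 1)).inf' Finset.nonempty_range_add_one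
          (fun i => hs (φ x ((i : ℝ) * Ts)))))
    (ls lφ : ℝ) (hls : 0 < ls) (hlφ : 0 < lφ)
    (hlip_s : ∀ x y : EuclideanSpace ℝ (Fin n), |hs x - hs y| ≤ ls * ‖x - y‖)
    (hlip_φ : ∀ x : EuclideanSpace ℝ (Fin n), ∀ τ₁ ∈ Icc (0:ℝ) T, ∀ τ₂ ∈ Icc (0:ℝ) T,
      ‖φ x τ₁ - φ x τ₂‖ ≤ lφ * |τ₁ - τ₂|)
    (ε : ℝ) (hε : (1 / 2) * Ts * lφ * ls ≤ ε)
    (h : EuclideanSpace ℝ (Fin n) → ℝ)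
    (hlt : ∀ x, h x < hbarStar x)
    (ubarSstar : Set (EuclideanSpace ℝ (Fin n)))
    (hubarSstar : ubarSstar = {x | (1 / 2) * Ts * lφ * ls ≤ hbarStar x}) :
    {x | ε ≤ h x} ⊆ ubarSstar ∧ ubarSstar ⊆ Sstar := by
  subst hSstar hubarSstar
  have hTs0 : 0 < Ts := by rw [hTs]; positivity
  have hNT : (N : ℝ) * Ts = T := by rw [hTs]; field_simp
  have hmargin : (1 / 2) * Ts * lφ * ls = ls * lφ * Ts / 2 := by ring
  refine ⟨fun x hx => (hε.trans hx).trans (hlt x).le, fun x hx => ?_⟩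
  simp only [mem_ofPred_eq, hhbarStar, le_min_iff, Finset.le_inf'_iff, Finset.mem_range,
    Nat.lt_succ_iff, hmargin] at hx ⊢
  obtain ⟨hx_end, hx_samples⟩ := hx
  rw [hNT] at hx_end
  refine ⟨le_trans (by positivity) hx_end, fun τ hτ => ?_⟩
  rw [← hNT] at hτ hlip_φ
  refine nonneg_of_le_at_samples (g := fun τ => hs (φ x τ)) (by positivity) hTs0
    (fun a ha b hb => ?_) hx_samples hτ
  calc |hs (φ x a) - hs (φ x b)| ≤ ls * ‖φ x a - φ x b‖ := hlip_s _ _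
    _ ≤ ls * (lφ * |a - b|) := by gcongr; exact hlip_φ x a ha b hb
    _ = ls * lφ * |a - b| := by ring

/-- Under the semiflow `φ` on `ℝ^n` with safe set `S_s = {h_s ≥ 0}`, backup
safe set `S_b = {h_b ≥ 0}` with `S_b ⊆ S_s` forward invariant under `φ`,
`S_* = {x : h_*(x) ≥ 0}` where `h_*(x) = min{h_b(φ(x,T)), inf_{τ∈[0,T]} h_s(φ(x,τ))}`
(so `x ∈ S_*` iff `h_b(φ(x,T)) ≥ 0` and `h_s(φ(x,τ)) ≥ 0` for all `τ ∈ [0,T]`),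
`T_s = T/N`, `h̄_*` the sampled barrier function, `h_s` Lipschitz with constant `l_s > 0`,
and `τ ↦ φ(x,τ)` Lipschitz on `[0,T]` with constant `l_φ > 0`: if
`ε ≥ (1/2)·T_s·l_φ·l_s` and `h(x) < h̄_*(x)` for all `x`, then
`{x : h(x) ≥ ε} ⊆ underbar-S_* ⊆ S_*`, where
`underbar-S_* = {x : h̄_*(x) ≥ (1/2)·T_s·l_φ·l_s}`. -/
theorem h_superlevel_subset_ubarSstar_subset_Sstar
    (n : ℕ) (hn : 0 < n)
    (φ : EuclideanSpace ℝ (Fin n) → ℝ → EuclideanSpace ℝ (Fin n))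
    (hφ0 : ∀ x, φ x 0 = x)
    (hφadd : ∀ (x : EuclideanSpace ℝ (Fin n)) (s t : ℝ), 0 ≤ s → 0 ≤ t →
      φ x (s + t) = φ (φ x s) t)
    (hs hb : EuclideanSpace ℝ (Fin n) → ℝ)
    (Ss Sb Sstar : Set (EuclideanSpace ℝ (Fin n)))
    (hSs : Ss = {x | 0 ≤ hs x})
    (hSb : Sb = {x | 0 ≤ hb x})
    (hsub : Sb ⊆ Ss)
    (hinv : ∀ x ∈ Sb, ∀ t : ℝ, 0 ≤ t → φ x t ∈ Sb)
    (T : ℝ) (hT : 0 < T)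
    (hSstar : Sstar = {x | 0 ≤ hb (φ x T) ∧ ∀ τ ∈ Icc (0:ℝ) T, 0 ≤ hs (φ x τ)})
    (N : ℕ) (hN : 0 < N) (Ts : ℝ) (hTs : Ts = T / N)
    (hbarStar : EuclideanSpace ℝ (Fin n) → ℝ)
    (hhbarStar : ∀ x, hbarStar x =
      min (hb (φ x ((N : ℝ) * Ts)))
        ((Finset.range (N + 1)).inf' Finset.nonempty_range_add_one
          (fun i => hs (φ x ((i : ℝ) * Ts)))))
    (ls lφ : ℝ) (hls : 0 < ls) (hlφ : 0 < lφ)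
    (hlip_s : ∀ x y : EuclideanSpace ℝ (Fin n), |hs x - hs y| ≤ ls * ‖x - y‖)
    (hlip_φ : ∀ x : EuclideanSpace ℝ (Fin n), ∀ τ₁ ∈ Icc (0:ℝ) T, ∀ τ₂ ∈ Icc (0:ℝ) T,
      ‖φ x τ₁ - φ x τ₂‖ ≤ lφ * |τ₁ - τ₂|)
    (ε : ℝ) (hε : (1 / 2) * Ts * lφ * ls ≤ ε)
    (h : EuclideanSpace ℝ (Fin n) → ℝ)
    (hlt : ∀ x, h x < hbarStar x)
    (ubarSstar : Set (EuclideanSpace ℝ (Fin n)))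
    (hubarSstar : ubarSstar = {x | (1 / 2) * Ts * lφ * ls ≤ hbarStar x}) :
    {x | ε ≤ h x} ⊆ ubarSstar ∧ ubarSstar ⊆ Sstar :=
  h_superlevel_subset_ubarSstar_subset_Sstar_general n φ hs hb Sstar T hT hSstar N hN Ts hTs
    hbarStar hhbarStar ls lφ hls hlφ hlip_s hlip_φ ε hε h hlt ubarSstar hubarSstar
end

section
/- With the definitions and assumptions in the context, let ℓ ∈ {1,…,ν} and x_0 ∈ S̄_{*_ℓ}. Then: (a) for all t ≥ T, φ_ℓ(x_0, t) ∈ S_{b_ℓ}; and (b) for all i ∈ {0,1,…,N}, φ_ℓ(x_0, i·T_s) ∈ S̄_{*_ℓ} ⊆ S̄_*. -/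
/-!
After the horizon `N * Ts = T` the backup trajectory is in the forward invariant set `S_b ⊆ S_s`,
so every sample `φ x₀ (m * Ts)`, `m ∈ ℕ`, is safe, not only those with `m ≤ N`. By the semiflow
property the samples of `φ x₀ (i * Ts)` are the samples of `x₀` shifted by `i`, hence the sampled
certificate of `x₀` carries over to every `φ x₀ (i * Ts)`.
-/

open Set Finset

variable {X : Type*} {φ : X → ℝ → X} {Ss Sb : Set X} {N : ℕ} {Ts : ℝ}

/-- The paper's `h̄_{*_j}` for a single backup semiflow `φ`. -/
def sampledBarrier (φ : X → ℝ → X) (hs hb : X → ℝ) (N : ℕ) (Ts : ℝ) (x : X) : ℝ :=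
  min (hb (φ x (N * Ts)))
    ((range (N + 1)).inf' nonempty_range_add_one fun i => hs (φ x (i * Ts)))

def sampledSafeSet (φ : X → ℝ → X) (Ss Sb : Set X) (N : ℕ) (Ts : ℝ) : Set X :=
  {x | φ x (N * Ts) ∈ Sb ∧ ∀ i ≤ N, φ x (i * Ts) ∈ Ss}

theorem setOf_sampledBarrier_nonneg (hs hb : X → ℝ) :
    {x | 0 ≤ sampledBarrier φ hs hb N Ts x} =
      sampledSafeSet φ {x | 0 ≤ hs x} {x | 0 ≤ hb x} N Ts := by
  ext x
  simp [sampledBarrier, sampledSafeSet, le_inf'_iff]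

theorem mem_of_isForwardInvariant_of_le
    (hφ : ∀ x s t, 0 ≤ s → 0 ≤ t → φ x (s + t) = φ (φ x s) t)
    (hinv : IsForwardInvariant (flip φ) Sb) {x : X} {T t : ℝ} (hT : 0 ≤ T) (hTt : T ≤ t)
    (hx : φ x T ∈ Sb) : φ x t ∈ Sb := by
  have hshift : φ x t = φ (φ x T) (t - T) := by
    rw [← hφ x T (t - T) hT (sub_nonneg.2 hTt), add_sub_cancel]
  rw [hshift]
  exact hinv (sub_nonneg.2 hTt) hx

theorem semiflow_natCast_mul_add
    (hφ : ∀ x s t, 0 ≤ s → 0 ≤ t → φ x (s + t) = φ (φ x s) t) (hTs : 0 ≤ Ts) (x : X)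
    (i k : ℕ) : φ (φ x (i * Ts)) (k * Ts) = φ x ((i + k : ℕ) * Ts) := by
  rw [← hφ x _ _ (by positivity) (by positivity)]
  push_cast
  ring_nf

theorem semiflow_natCast_mul_mem_sampledSafeSet
    (hφ : ∀ x s t, 0 ≤ s → 0 ≤ t → φ x (s + t) = φ (φ x s) t)
    (hinv : IsForwardInvariant (flip φ) Sb) (hsub : Sb ⊆ Ss) (hTs : 0 ≤ Ts) {x : X}
    (hx : x ∈ sampledSafeSet φ Ss Sb N Ts) (i : ℕ) :
    φ x (i * Ts) ∈ sampledSafeSet φ Ss Sb N Ts := by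
  have hhorizon : ∀ m : ℕ, N ≤ m → φ x (m * Ts) ∈ Sb := fun m hm =>
    mem_of_isForwardInvariant_of_le hφ hinv (by positivity)
      (mul_le_mul_of_nonneg_right (Nat.cast_le.2 hm) hTs) hx.1
  have hsafe : ∀ m : ℕ, φ x (m * Ts) ∈ Ss := fun m =>
    (le_or_gt m N).elim (hx.2 m) fun hm => hsub (hhorizon m hm.le)
  refine ⟨?_, fun k _ => ?_⟩ <;> rw [semiflow_natCast_mul_add hφ hTs]
  · exact hhorizon _ (Nat.le_add_left N i)
  · exact hsafe _

theorem multi_backup_SbarStar_sample_invariance_general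
    (n ν : ℕ) (hν : 0 < ν)
    (hs : EuclideanSpace ℝ (Fin n) → ℝ)
    (Ss : Set (EuclideanSpace ℝ (Fin n)))
    (hSs : Ss = {x | 0 ≤ hs x})
    (φ : Fin ν → EuclideanSpace ℝ (Fin n) → ℝ → EuclideanSpace ℝ (Fin n))
    (hφadd : ∀ (j : Fin ν) (x : EuclideanSpace ℝ (Fin n)) (s t : ℝ), 0 ≤ s → 0 ≤ t →
      φ j x (s + t) = φ j (φ j x s) t)
    (hb : Fin ν → EuclideanSpace ℝ (Fin n) → ℝ)
    (Sb : Fin ν → Set (EuclideanSpace ℝ (Fin n)))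
    (hSb : ∀ j, Sb j = {x | 0 ≤ hb j x})
    (hsub : ∀ j, Sb j ⊆ Ss)
    (hinv : ∀ j, ∀ x ∈ Sb j, ∀ t : ℝ, 0 ≤ t → φ j x t ∈ Sb j)
    (T : ℝ) (hT : 0 < T)
    (N : ℕ) (hN : 0 < N) (Ts : ℝ) (hTs : Ts = T / N)
    (hbarStarj : Fin ν → EuclideanSpace ℝ (Fin n) → ℝ)
    (hhbarStarj : ∀ j x, hbarStarj j x =
      min (hb j (φ j x ((N : ℝ) * Ts)))
        ((Finset.range (N + 1)).inf' Finset.nonempty_range_add_one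
          (fun i => hs (φ j x ((i : ℝ) * Ts)))))
    (hbarStar : EuclideanSpace ℝ (Fin n) → ℝ)
    (hhbarStar : ∀ x, hbarStar x =
      Finset.univ.sup' ⟨⟨0, hν⟩, Finset.mem_univ _⟩ (fun j => hbarStarj j x))
    (SbarStarj : Fin ν → Set (EuclideanSpace ℝ (Fin n)))
    (hSbarStarj : ∀ j, SbarStarj j = {x | 0 ≤ hbarStarj j x})
    (SbarStar : Set (EuclideanSpace ℝ (Fin n)))
    (hSbarStar : SbarStar = {x | 0 ≤ hbarStar x})
    (ℓ : Fin ν)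
    (x₀ : EuclideanSpace ℝ (Fin n)) (hx₀ : x₀ ∈ SbarStarj ℓ) :
    (∀ t : ℝ, T ≤ t → φ ℓ x₀ t ∈ Sb ℓ) ∧
    (∀ i : ℕ, i ≤ N → φ ℓ x₀ ((i : ℝ) * Ts) ∈ SbarStarj ℓ) ∧
    SbarStarj ℓ ⊆ SbarStar := by
  have hsubset : SbarStarj ℓ ⊆ SbarStar := fun x hx => by
    rw [hSbarStarj] at hx
    rw [hSbarStar]
    show 0 ≤ hbarStar x
    rw [hhbarStar]
    exact le_sup'_of_le _ (mem_univ ℓ) hx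
  have hTs0 : 0 ≤ Ts := by rw [hTs]; positivity
  have hhorizon : (N : ℝ) * Ts = T := by rw [hTs]; field_simp
  have hinvℓ : IsForwardInvariant (flip (φ ℓ)) (Sb ℓ) := fun t ht x hx => hinv ℓ x hx t ht
  have hSj : SbarStarj ℓ = sampledSafeSet (φ ℓ) Ss (Sb ℓ) N Ts := by
    rw [hSbarStarj, show hbarStarj ℓ = sampledBarrier (φ ℓ) hs (hb ℓ) N Ts from
      funext (hhbarStarj ℓ), setOf_sampledBarrier_nonneg, hSs, hSb]
  rw [hSj] at hx₀ ⊢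
  refine ⟨fun t ht => ?_, fun i _ => ?_, hSj ▸ hsubset⟩
  · exact mem_of_isForwardInvariant_of_le (hφadd ℓ) hinvℓ hT.le ht (hhorizon ▸ hx₀.1)
  · exact semiflow_natCast_mul_mem_sampledSafeSet (hφadd ℓ) hinvℓ (hsub ℓ) hTs0 hx₀ i

/-- With `ν` backup semiflows `φ_j` on `ℝ^n`, safe set `S_s = {h_s ≥ 0}`,
backup safe sets `S_{b_j} = {h_{b_j} ≥ 0} ⊆ S_s` forward invariant under `φ_j`, `T_s = T/N`,
`h̄_{*_j}(x) = min{h_{b_j}(φ_j(x,N·T_s)), min_{i∈{0,…,N}} h_s(φ_j(x,i·T_s))}`,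
`h̄_*(x) = max_j h̄_{*_j}(x)`, `S̄_{*_j} = {x : h̄_{*_j}(x) ≥ 0}`, and
`S̄_* = {x : h̄_*(x) ≥ 0}`: if `ℓ ∈ {1,…,ν}` and `x₀ ∈ S̄_{*_ℓ}`, then (a) for all `t ≥ T`,
`φ_ℓ(x₀,t) ∈ S_{b_ℓ}`, and (b) for all `i ∈ {0,1,…,N}`,
`φ_ℓ(x₀, i·T_s) ∈ S̄_{*_ℓ} ⊆ S̄_*`. -/
theorem multi_backup_SbarStar_sample_invariance
    (n ν : ℕ) (hn : 0 < n) (hν : 0 < ν)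
    (hs : EuclideanSpace ℝ (Fin n) → ℝ)
    (Ss : Set (EuclideanSpace ℝ (Fin n)))
    (hSs : Ss = {x | 0 ≤ hs x})
    (φ : Fin ν → EuclideanSpace ℝ (Fin n) → ℝ → EuclideanSpace ℝ (Fin n))
    (hφ0 : ∀ j x, φ j x 0 = x)
    (hφadd : ∀ (j : Fin ν) (x : EuclideanSpace ℝ (Fin n)) (s t : ℝ), 0 ≤ s → 0 ≤ t →
      φ j x (s + t) = φ j (φ j x s) t)
    (hb : Fin ν → EuclideanSpace ℝ (Fin n) → ℝ)
    (Sb : Fin ν → Set (EuclideanSpace ℝ (Fin n)))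
    (hSb : ∀ j, Sb j = {x | 0 ≤ hb j x})
    (hsub : ∀ j, Sb j ⊆ Ss)
    (hinv : ∀ j, ∀ x ∈ Sb j, ∀ t : ℝ, 0 ≤ t → φ j x t ∈ Sb j)
    (T : ℝ) (hT : 0 < T)
    (N : ℕ) (hN : 0 < N) (Ts : ℝ) (hTs : Ts = T / N)
    (hbarStarj : Fin ν → EuclideanSpace ℝ (Fin n) → ℝ)
    (hhbarStarj : ∀ j x, hbarStarj j x =
      min (hb j (φ j x ((N : ℝ) * Ts)))
        ((Finset.range (N + 1)).inf' Finset.nonempty_range_add_one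
          (fun i => hs (φ j x ((i : ℝ) * Ts)))))
    (hbarStar : EuclideanSpace ℝ (Fin n) → ℝ)
    (hhbarStar : ∀ x, hbarStar x =
      Finset.univ.sup' ⟨⟨0, hν⟩, Finset.mem_univ _⟩ (fun j => hbarStarj j x))
    (SbarStarj : Fin ν → Set (EuclideanSpace ℝ (Fin n)))
    (hSbarStarj : ∀ j, SbarStarj j = {x | 0 ≤ hbarStarj j x})
    (SbarStar : Set (EuclideanSpace ℝ (Fin n)))
    (hSbarStar : SbarStar = {x | 0 ≤ hbarStar x})
    (ℓ : Fin ν)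
    (x₀ : EuclideanSpace ℝ (Fin n)) (hx₀ : x₀ ∈ SbarStarj ℓ) :
    (∀ t : ℝ, T ≤ t → φ ℓ x₀ t ∈ Sb ℓ) ∧
    (∀ i : ℕ, i ≤ N → φ ℓ x₀ ((i : ℝ) * Ts) ∈ SbarStarj ℓ) ∧
    SbarStarj ℓ ⊆ SbarStar :=
  multi_backup_SbarStar_sample_invariance_general n ν hν hs Ss hSs φ hφadd hb Sb hSb hsub hinv T hT
    N hN Ts hTs hbarStarj hhbarStarj hbarStar hhbarStar SbarStarj hSbarStarj SbarStar hSbarStar ℓ x₀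
    hx₀
end
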